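/- Let T be a bounded, left-invertible and analytic operator on a complex Hilbert space H; set E = ker T*, P_E the orthogonal projection onto E, L = (T*T)⁻¹T*. Assume that for every bounded operator A on H the following equivalence holds: A ∈ W(T) if and only if there exists a : ℕ → ℂ with P_E L^n(A f) = Σ_{k=0}^{n} a_k·(P_E L^{n−k} f) for all f ∈ H and n ∈ ℕ. Then T is reflexive: every bounded operator B on H such that B(M) ⊆ M for every closed subspace M ⊆ H with T(M) ⊆ M belongs to W(T). -/

import Mathlib

/-!
Let `P` be the orthogonal projection onto `E = ker T*`. For small `z` the operator
`D_z = ∑ zⁿ P Lⁿ = P (1 - z L)⁻¹` satisfies `D_z T = z D_z`, so the kernel of each functional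
`⟪u, D_z ·⟫` is a closed `T`-invariant subspace, hence `B`-invariant; this forces
`D_z B = χ(z) D_z` for a scalar `χ(z)`. For `0 ≠ e ∈ E`, the closed `T`-invariant subspace
`{x | ∀ n, P Lⁿ x ∈ ℂ e}` contains `e`, so `P Lⁿ B e = aₙ e`, and `D_z e = e` gives
`χ(z) = ∑ aₙ zⁿ`. Comparing the coefficients of `D_z B = χ(z) D_z` yields
`P Lⁿ B = ∑_{k ≤ n} a_k P L^{n-k}`, which by hypothesis means `B ∈ W(T)`.
-/

/-- `A` belongs to `W(B)`, the smallest subalgebra of bounded operators containing `B` (and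
the identity) that is closed in the weak operator topology. -/
def MemWOTAlgebra {H : Type*} [NormedAddCommGroup H] [InnerProductSpace ℂ H]
    (B A : H →L[ℂ] H) : Prop :=
  ∀ 𝒜 : Subalgebra ℂ (H →L[ℂ] H), B ∈ 𝒜 →
    IsClosed ((ContinuousLinearMapWOT.ofCLM : (H →L[ℂ] H) → H →WOT[ℂ] H) '' (𝒜 : Set (H →L[ℂ] H))) → A ∈ 𝒜

open Filter Topology Finset
open scoped NNReal InnerProductSpace

theorem norm_mul_pow_le {R : Type*} [SeminormedRing R] (a b : R) (n : ℕ) :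
    ‖a * b ^ n‖ ≤ ‖a‖ * ‖b‖ ^ n := by
  induction n with
  | zero => simp
  | succ n ih =>
    rw [pow_succ, ← mul_assoc, pow_succ, ← mul_assoc]
    exact (norm_mul_le _ _).trans (mul_le_mul_of_nonneg_right ih (norm_nonneg b))

theorem pow_succ_mul_of_mul_eq_one {M : Type*} [Monoid M] {l t : M} (h : l * t = 1) (n : ℕ) :
    l ^ (n + 1) * t = l ^ n := by
  rw [pow_succ, mul_assoc, h, mul_one]

section PowerSeries

variable {𝕜 : Type*} [NontriviallyNormedField 𝕜]

theorem summable_norm_pow_smul_of_norm_le {E : Type*} [SeminormedAddCommGroup E]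
    [NormedSpace 𝕜 E] {w : ℕ → E} {r : ℝ} (hw : Summable fun n ↦ ‖w n‖ * r ^ n) {z : 𝕜}
    (hz : ‖z‖ ≤ r) : Summable fun n ↦ ‖z ^ n • w n‖ :=
  hw.of_nonneg_of_le (fun _ ↦ norm_nonneg _) fun n ↦ by
    rw [norm_smul, norm_pow, mul_comm]
    exact mul_le_mul_of_nonneg_left (pow_le_pow_left₀ (norm_nonneg z) hz n) (norm_nonneg _)

theorem summable_mul_pow_of_le_mul_pow {w : ℕ → ℝ} {C R r : ℝ} (hw0 : ∀ n, 0 ≤ w n)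
    (hw : ∀ n, w n ≤ C * R ^ n) (hr : 0 ≤ r) (hR : 0 ≤ R) (hrR : r * R < 1) :
    Summable fun n ↦ w n * r ^ n :=
  ((summable_geometric_of_lt_one (by positivity) hrR).mul_left C).of_nonneg_of_le
    (fun n ↦ mul_nonneg (hw0 n) (pow_nonneg hr n)) fun n ↦ by
      rw [mul_pow, mul_comm (r ^ n), ← mul_assoc]
      exact mul_le_mul_of_nonneg_right (hw n) (pow_nonneg hr n)

theorem eq_zero_of_tsum_pow_smul_eventually_eq_zero {E : Type*} [NormedAddCommGroup E]
    [NormedSpace 𝕜 E] [CompleteSpace E] {c : ℕ → E} {r : ℝ≥0} (hr : 0 < r)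
    (hc : Summable fun n ↦ ‖c n‖ * (r : ℝ) ^ n)
    (h : ∀ᶠ z in 𝓝 (0 : 𝕜), ∑' n, z ^ n • c n = 0) : c = 0 := by
  let p : FormalMultilinearSeries 𝕜 𝕜 E := fun n ↦ ContinuousMultilinearMap.mkPiRing 𝕜 (Fin n) (c n)
  have hp : 0 < p.radius :=
    lt_of_lt_of_le (by exact_mod_cast hr) (p.le_radius_of_summable_norm (by simpa [p] using hc))
  have hsum : p.sum = fun z ↦ ∑' n, z ^ n • c n := by
    ext z
    simp [p, FormalMultilinearSeries.sum, ContinuousMultilinearMap.mkPiRing_apply]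
  have hp0 := (p.hasFPowerSeriesOnBall hp).hasFPowerSeriesAt.eq_zero_of_eventually (hsum ▸ h)
  ext n
  exact (ContinuousMultilinearMap.mkPiRing_eq_zero_iff _).mp (congrFun hp0 n)

variable {A : Type*} [NormedRing A] [NormedAlgebra 𝕜 A] {a : ℕ → 𝕜} {y : ℕ → A}

theorem summable_norm_sum_smul_range_of_summable_norm (ha : Summable fun n ↦ ‖a n‖)
    (hy : Summable fun n ↦ ‖y n‖) :
    Summable fun n ↦ ‖∑ k ∈ range (n + 1), a k • y (n - k)‖ := by
  have ha' : Summable fun n ↦ ‖algebraMap 𝕜 A (a n)‖ := by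
    simpa only [norm_algebraMap] using ha.mul_right ‖(1 : A)‖
  simpa only [Algebra.smul_def] using summable_norm_sum_mul_range_of_summable_norm ha' hy

theorem tsum_smul_tsum_eq_tsum_sum_range_of_summable_norm [CompleteSpace 𝕜] [CompleteSpace A]
    (ha : Summable fun n ↦ ‖a n‖) (hy : Summable fun n ↦ ‖y n‖) :
    (∑' n, a n) • ∑' n, y n = ∑' n, ∑ k ∈ range (n + 1), a k • y (n - k) := by
  have ha' : Summable fun n ↦ ‖algebraMap 𝕜 A (a n)‖ := by
    simpa only [norm_algebraMap] using ha.mul_right ‖(1 : A)‖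
  have hmap : algebraMap 𝕜 A (∑' n, a n) = ∑' n, algebraMap 𝕜 A (a n) :=
    (algebraMapCLM 𝕜 A).map_tsum ha.of_norm
  rw [Algebra.smul_def, hmap]
  simpa only [Algebra.smul_def] using tsum_mul_tsum_eq_tsum_sum_range_of_summable_norm ha' hy

end PowerSeries

theorem eq_sum_range_smul_of_tsum_pow_smul_eq {𝕜 A : Type*} [RCLike 𝕜] [NormedRing A]
    [NormedAlgebra 𝕜 A] [CompleteSpace A] {a : ℕ → 𝕜} {x y : ℕ → A} {r : ℝ≥0} (hr : 0 < r)
    (hx : Summable fun n ↦ ‖x n‖ * (r : ℝ) ^ n) (ha : Summable fun n ↦ ‖a n‖ * (r : ℝ) ^ n)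
    (hy : Summable fun n ↦ ‖y n‖ * (r : ℝ) ^ n)
    (h : ∀ᶠ z in 𝓝 (0 : 𝕜), ∑' n, z ^ n • x n = (∑' n, a n * z ^ n) • ∑' n, z ^ n • y n)
    (n : ℕ) : x n = ∑ k ∈ range (n + 1), a k • y (n - k) := by
  set d : ℕ → A := fun n ↦ ∑ k ∈ range (n + 1), a k • y (n - k)
  have cauchy : ∀ z : 𝕜, ‖z‖ ≤ r → (Summable fun n ↦ ‖z ^ n • d n‖) ∧
      (∑' n, a n * z ^ n) • ∑' n, z ^ n • y n = ∑' n, z ^ n • d n := by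
    intro z hz
    have hterm : ∀ n, ∑ k ∈ range (n + 1), (a k * z ^ k) • z ^ (n - k) • y (n - k) =
        z ^ n • d n := by
      intro n
      rw [Finset.smul_sum]
      refine Finset.sum_congr rfl fun k hk ↦ ?_
      rw [smul_smul, smul_smul, mul_right_comm, mul_assoc, ← pow_add,
        Nat.sub_add_cancel (Nat.lt_succ_iff.mp (Finset.mem_range.mp hk)), mul_comm]
    have haz : Summable fun n ↦ ‖a n * z ^ n‖ := by
      simpa only [smul_eq_mul, mul_comm] using summable_norm_pow_smul_of_norm_le ha hz
    have hyz := summable_norm_pow_smul_of_norm_le hy hz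
    constructor
    · simpa only [hterm] using summable_norm_sum_smul_range_of_summable_norm haz hyz
    · simpa only [hterm] using tsum_smul_tsum_eq_tsum_sum_range_of_summable_norm haz hyz
  have hd : Summable fun n ↦ ‖d n‖ * (r : ℝ) ^ n := by
    simpa [norm_smul, mul_comm] using (cauchy (r : ℝ) (by simp)).1
  have hzero := eq_zero_of_tsum_pow_smul_eventually_eq_zero (𝕜 := 𝕜) (c := x - d) hr
    (((hx.add hd).of_nonneg_of_le (fun _ ↦ by positivity)) fun n ↦ by
      simp only [Pi.sub_apply, ← add_mul]; gcongr; exact norm_sub_le _ _) ?_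
  · exact sub_eq_zero.mp (congrFun hzero n)
  filter_upwards [h, Metric.closedBall_mem_nhds (0 : 𝕜) hr] with z hz hzr
  rw [mem_closedBall_zero_iff] at hzr
  simp only [Pi.sub_apply, smul_sub]
  rw [(summable_norm_pow_smul_of_norm_le hx hzr).of_norm.tsum_sub (cauchy z hzr).1.of_norm, hz,
    (cauchy z hzr).2, sub_self]

def MemAlgLat {R X : Type*} [Semiring R] [TopologicalSpace X] [AddCommMonoid X] [Module R X]
    (T B : X →L[R] X) : Prop :=
  ∀ M : Submodule R X, IsClosed (M : Set X) → (∀ x ∈ M, T x ∈ M) → ∀ x ∈ M, B x ∈ M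

section Normed

variable {𝕜 X : Type*} [NontriviallyNormedField 𝕜] [NormedAddCommGroup X] [NormedSpace 𝕜 X]
  {T B : X →L[𝕜] X}

theorem MemAlgLat.exists_comp_eq_smul (hB : MemAlgLat T B) {ψ : X →L[𝕜] 𝕜} {z : 𝕜}
    (hψ : ψ ∘L T = z • ψ) : ∃ c : 𝕜, ψ ∘L B = c • ψ := by
  have hker : ⨅ _ : Unit, LinearMap.ker (ψ : X →ₗ[𝕜] 𝕜) ≤
      LinearMap.ker ((ψ ∘L B : X →L[𝕜] 𝕜) : X →ₗ[𝕜] 𝕜) := by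
    rw [iInf_const]
    refine fun x hx ↦ hB _ ψ.isClosed_ker (fun y hy ↦ ?_) x hx
    simp only [LinearMap.mem_ker, ContinuousLinearMap.coe_coe] at hy ⊢
    simpa [hy] using congr($hψ y)
  obtain ⟨c, hc⟩ := Submodule.mem_span_singleton.mp
    (by simpa using mem_span_of_iInf_ker_le_ker hker)
  exact ⟨c, ContinuousLinearMap.coe_injective hc.symm⟩

theorem MemAlgLat.exists_apply_pow_eq_smul [CompleteSpace 𝕜] (hB : MemAlgLat T B)
    {P L : X →L[𝕜] X} (hLT : L * T = 1) (hPT : P * T = 0) {e : X} (hPe : P e = e)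
    (hLe : L e = 0) (n : ℕ) : ∃ a : 𝕜, P ((L ^ n) (B e)) = a • e := by
  let M : Submodule 𝕜 X := ⨅ k, (𝕜 ∙ e).comap ((P * L ^ k : X →L[𝕜] X) : X →ₗ[𝕜] X)
  have hM : IsClosed (M : Set X) := by
    rw [Submodule.coe_iInf]
    exact isClosed_iInter fun k ↦
      (Submodule.closed_of_finiteDimensional (𝕜 ∙ e)).preimage (P * L ^ k).continuous
  have hTM : ∀ x ∈ M, T x ∈ M := by
    simp only [M, Submodule.mem_iInf, Submodule.mem_comap, ContinuousLinearMap.coe_coe]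
    intro x hx k
    cases k with
    | zero => simp [← mul_apply_eq_comp, hPT]
    | succ k => simpa [← mul_apply_eq_comp, mul_assoc, pow_succ_mul_of_mul_eq_one hLT] using hx k
  have heM : e ∈ M := by
    simp only [M, Submodule.mem_iInf, Submodule.mem_comap, ContinuousLinearMap.coe_coe]
    intro k
    cases k with
    | zero => simp [hPe, Submodule.mem_span_singleton_self]
    | succ k => simp [pow_succ, hLe]
  have hBeM := hB M hM hTM e heM
  simp only [M, Submodule.mem_iInf, Submodule.mem_comap, ContinuousLinearMap.coe_coe] at hBeM
  obtain ⟨a, ha⟩ := Submodule.mem_span_singleton.mp (hBeM n)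
  exact ⟨a, ha.symm⟩

theorem norm_le_of_apply_pow_eq_smul {P L : X →L[𝕜] X} {e : X} (he : e ≠ 0) {n : ℕ} {a : 𝕜}
    (ha : P ((L ^ n) (B e)) = a • e) : ‖a‖ ≤ ‖P‖ * ‖B‖ * ‖L‖ ^ n := by
  refine le_of_mul_le_mul_right ?_ (norm_pos_iff.mpr he)
  calc ‖a‖ * ‖e‖ = ‖(P * L ^ n) (B e)‖ := by rw [← norm_smul, ← ha]; rfl
    _ ≤ ‖P‖ * ‖L‖ ^ n * (‖B‖ * ‖e‖) := ((P * L ^ n).le_opNorm_of_le (B.le_opNorm e)).trans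
      (mul_le_mul_of_nonneg_right (norm_mul_pow_le P L n) (by positivity))
    _ = ‖P‖ * ‖B‖ * ‖L‖ ^ n * ‖e‖ := by ring

end Normed

section Banach

variable {𝕜 X : Type*} [NontriviallyNormedField 𝕜] [NormedAddCommGroup X] [NormedSpace 𝕜 X]
  [CompleteSpace X]

/-- In Shimorin's analytic model of a left-invertible operator `T` with left inverse `L`, where
`P` projects onto `ker T*`, `evalAt P L z f` is the value at `z` of the function representing
`f`. -/
noncomputable def evalAt (P L : X →L[𝕜] X) (z : 𝕜) : X →L[𝕜] X := ∑' n, z ^ n • (P * L ^ n)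

variable {P L T : X →L[𝕜] X} {z : 𝕜}

theorem hasSum_evalAt (hz : ‖z‖ * ‖L‖ < 1) :
    HasSum (fun n ↦ z ^ n • (P * L ^ n)) (evalAt P L z) := by
  refine (Summable.of_norm_bounded
    ((summable_geometric_of_lt_one (by positivity) hz).mul_left ‖P‖) fun n ↦ ?_).hasSum
  calc ‖z ^ n • (P * L ^ n)‖ ≤ ‖z‖ ^ n * (‖P‖ * ‖L‖ ^ n) := by
        rw [norm_smul, norm_pow]; gcongr; exact norm_mul_pow_le P L n
    _ = ‖P‖ * (‖z‖ * ‖L‖) ^ n := by ring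

theorem hasSum_evalAt_apply (hz : ‖z‖ * ‖L‖ < 1) (x : X) :
    HasSum (fun n ↦ z ^ n • P ((L ^ n) x)) (evalAt P L z x) :=
  (hasSum_evalAt hz).mapL (ContinuousLinearMap.apply 𝕜 X x)

theorem evalAt_mul_eq_smul (hz : ‖z‖ * ‖L‖ < 1) (hLT : L * T = 1) (hPT : P * T = 0) :
    evalAt P L z * T = z • evalAt P L z := by
  have h := (hasSum_evalAt (P := P) hz).mul_right T
  rw [← hasSum_nat_add_iff' 1] at h
  simp only [Finset.range_one, Finset.sum_singleton, pow_zero, one_smul, mul_one, hPT,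
    sub_zero] at h
  refine h.unique (((hasSum_evalAt hz).const_smul z).congr_fun fun n ↦ ?_)
  rw [smul_mul_assoc, mul_assoc, pow_succ_mul_of_mul_eq_one hLT, pow_succ', mul_smul]

theorem evalAt_apply_eq_self (hz : ‖z‖ * ‖L‖ < 1) {e : X} (hPe : P e = e) (hLe : L e = 0) :
    evalAt P L z e = e := by
  refine (hasSum_evalAt_apply hz e).unique ?_
  convert hasSum_single (f := fun n ↦ z ^ n • P ((L ^ n) e)) 0 fun n hn ↦ ?_
  · simp [hPe]
  · obtain ⟨m, rfl⟩ := Nat.exists_eq_succ_of_ne_zero hn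
    simp [pow_succ, hLe]

end Banach

section Hilbert

variable {𝕜 X : Type*} [RCLike 𝕜] [NormedAddCommGroup X] [InnerProductSpace 𝕜 X]
  {T B : X →L[𝕜] X}

theorem MemAlgLat.mul_eq_smul_of_mul_eq_smul (hB : MemAlgLat T B) {D : X →L[𝕜] X} {z χ : 𝕜}
    (hDT : D * T = z • D) {e : X} (he : e ≠ 0) (hDe : D e = e) (hDBe : D (B e) = χ • e) :
    D * B = χ • D := by
  have key : ∀ u : X, ⟪u, e⟫_𝕜 ≠ 0 → ∀ f, ⟪u, D (B f)⟫_𝕜 = χ * ⟪u, D f⟫_𝕜 := by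
    intro u hu f
    obtain ⟨c, hc⟩ := hB.exists_comp_eq_smul (ψ := innerSL 𝕜 u ∘L D) (z := z) (by
      rw [ContinuousLinearMap.comp_assoc, ← ContinuousLinearMap.mul_def, hDT,
        ContinuousLinearMap.comp_smul])
    have hce : c = χ := by
      have h := congr($hc e)
      simp only [ContinuousLinearMap.comp_apply, innerSL_apply_apply, hDBe, hDe,
        smul_apply, inner_smul_right, smul_eq_mul] at h
      exact (mul_right_cancel₀ hu h).symm
    simpa [hce] using congr($hc f)
  ext f
  refine ext_inner_left 𝕜 fun u ↦ ?_
  by_cases hu : ⟪u, e⟫_𝕜 = 0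
  · have hue : ⟪u + e, e⟫_𝕜 ≠ 0 := by rwa [inner_add_left, hu, zero_add, inner_self_ne_zero]
    have h1 := key _ hue f
    have h2 := key e (inner_self_ne_zero.mpr he) f
    simp only [mul_apply_eq_comp, smul_apply, inner_smul_right, inner_add_left] at h1 h2 ⊢
    linear_combination h1 - h2
  · simpa [inner_smul_right] using key u hu f

variable [CompleteSpace X] {P L : X →L[𝕜] X} {e : X}

theorem MemAlgLat.evalAt_mul_eq_tsum_smul (hB : MemAlgLat T B) (hLT : L * T = 1)
    (hPT : P * T = 0) (he : e ≠ 0) (hPe : P e = e) (hLe : L e = 0) {a : ℕ → 𝕜}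
    (ha : ∀ n, P ((L ^ n) (B e)) = a n • e) {z : 𝕜} (hz : ‖z‖ * ‖L‖ < 1)
    (hχ : Summable fun n ↦ a n * z ^ n) :
    evalAt P L z * B = (∑' n, a n * z ^ n) • evalAt P L z := by
  refine hB.mul_eq_smul_of_mul_eq_smul (evalAt_mul_eq_smul hz hLT hPT) he
    (evalAt_apply_eq_self hz hPe hLe) ?_
  refine (hasSum_evalAt_apply hz (B e)).unique (hχ.hasSum.smul_const e |>.congr_fun fun n ↦ ?_)
  rw [ha n, smul_smul, mul_comm]

theorem MemAlgLat.exists_mul_pow_mul_eq_sum (hB : MemAlgLat T B) (hLT : L * T = 1)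
    (hPT : P * T = 0) (he : e ≠ 0) (hPe : P e = e) (hLe : L e = 0) :
    ∃ a : ℕ → 𝕜, ∀ n, P * L ^ n * B = ∑ k ∈ range (n + 1), a k • (P * L ^ (n - k)) := by
  choose a ha using hB.exists_apply_pow_eq_smul hLT hPT hPe hLe
  have ha_le n : ‖a n‖ ≤ ‖P‖ * ‖B‖ * ‖L‖ ^ n := norm_le_of_apply_pow_eq_smul he (ha n)
  have hPLB : ∀ n, ‖P * L ^ n * B‖ ≤ ‖P‖ * ‖B‖ * ‖L‖ ^ n := fun n ↦
    calc ‖P * L ^ n * B‖ ≤ ‖P‖ * ‖L‖ ^ n * ‖B‖ := (norm_mul_le _ _).trans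
          (mul_le_mul_of_nonneg_right (norm_mul_pow_le P L n) (norm_nonneg _))
      _ = ‖P‖ * ‖B‖ * ‖L‖ ^ n := by ring
  obtain ⟨r, hr, hrL⟩ := exists_pos_mul_lt one_pos ‖L‖
  rw [mul_comm] at hrL
  lift r to ℝ≥0 using hr.le
  have hgeom {w : ℕ → ℝ} {C : ℝ} (hw0 : ∀ n, 0 ≤ w n) (hw : ∀ n, w n ≤ C * ‖L‖ ^ n) :
      Summable fun n ↦ w n * r ^ n :=
    summable_mul_pow_of_le_mul_pow hw0 hw r.2 (norm_nonneg L) hrL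
  refine ⟨a, eq_sum_range_smul_of_tsum_pow_smul_eq (mod_cast hr)
    (hgeom (fun _ ↦ norm_nonneg _) hPLB) (hgeom (fun _ ↦ norm_nonneg _) ha_le)
    (hgeom (fun _ ↦ norm_nonneg _) (norm_mul_pow_le P L)) ?_⟩
  filter_upwards [Metric.ball_mem_nhds (0 : 𝕜) hr] with z hz
  rw [mem_ball_zero_iff] at hz
  have hzL : ‖z‖ * ‖L‖ < 1 := (mul_le_mul_of_nonneg_right hz.le (norm_nonneg L)).trans_lt hrL
  have hχ : Summable fun n ↦ a n * z ^ n := .of_norm <| by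
    simpa only [norm_mul, norm_pow] using
      summable_mul_pow_of_le_mul_pow (fun _ ↦ norm_nonneg _) ha_le (norm_nonneg z)
        (norm_nonneg L) hzL
  have hDB : HasSum (fun n ↦ z ^ n • (P * L ^ n * B)) (evalAt P L z * B) := by
    simpa only [smul_mul_assoc] using (hasSum_evalAt hzL).mul_right B
  rw [hDB.tsum_eq, (hasSum_evalAt hzL).tsum_eq]
  exact hB.evalAt_mul_eq_tsum_smul hLT hPT he hPe hLe ha hzL hχ

end Hilbert

theorem stmt_17_general
    {H : Type*} [NormedAddCommGroup H] [InnerProductSpace ℂ H] [CompleteSpace H]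
    (T S : H →L[ℂ] H)
    (hS1 : S * (ContinuousLinearMap.adjoint T * T) = 1)
    (L : H →L[ℂ] H) (hL : L = S * ContinuousLinearMap.adjoint T)
    (hW : ∀ A : H →L[ℂ] H, MemWOTAlgebra T A ↔
      ∃ a : ℕ → ℂ, ∀ (f : H) (n : ℕ),
        Submodule.orthogonalProjectionOnto (LinearMap.ker (ContinuousLinearMap.adjoint T : H →ₗ[ℂ] H))
            ((L ^ n) (A f)) =
          ∑ k ∈ Finset.range (n + 1), a k •
            Submodule.orthogonalProjectionOnto (LinearMap.ker (ContinuousLinearMap.adjoint T : H →ₗ[ℂ] H))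
              ((L ^ (n - k)) f)) :
    ∀ B : H →L[ℂ] H,
      (∀ M : Submodule ℂ H, IsClosed (M : Set H) →
        (∀ x ∈ M, T x ∈ M) → (∀ x ∈ M, B x ∈ M)) →
      MemWOTAlgebra T B := by
  intro B hB
  set E := LinearMap.ker (ContinuousLinearMap.adjoint T : H →ₗ[ℂ] H)
  by_cases hE : E = ⊥
  · have : Subsingleton E := Submodule.subsingleton_iff_eq_bot.mpr hE
    exact (hW B).2 ⟨0, fun _ _ ↦ Subsingleton.elim _ _⟩
  obtain ⟨e, heE, he⟩ := Submodule.exists_mem_ne_zero_of_ne_bot hE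
  have hLT : L * T = 1 := by rw [hL, mul_assoc, hS1]
  have hPT : E.starProjection * T = 0 := by
    ext x
    refine (Submodule.starProjection_apply_eq_zero_iff (K := E)).mpr ?_
    have hx := Submodule.le_orthogonal_orthogonal T.range ⟨x, rfl⟩
    rwa [T.orthogonal_range] at hx
  have hLe : L e = 0 := by
    rw [hL, mul_apply_eq_comp, show ContinuousLinearMap.adjoint T e = 0 from heE, map_zero]
  obtain ⟨a, ha⟩ := MemAlgLat.exists_mul_pow_mul_eq_sum hB hLT hPT he
    (Submodule.starProjection_eq_self_iff.mpr heE) hLe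
  exact (hW B).2 ⟨a, fun f n ↦ Subtype.ext (by simpa using congr($(ha n) f))⟩

/-- Let `T` be bounded, left-invertible, analytic on a complex Hilbert
space `H`.  If `W(T)` coincides with the set of generalized multiplication operators with
scalar symbols, then `T` is reflexive: every bounded operator leaving invariant each closed
`T`-invariant subspace belongs to `W(T)`. -/
theorem stmt_17
    {H : Type*} [NormedAddCommGroup H] [InnerProductSpace ℂ H] [CompleteSpace H]
    (T S : H →L[ℂ] H)
    (hbelow : ∃ α : ℝ, 0 < α ∧ ∀ f : H, α * ‖f‖ ^ 2 ≤ ‖T f‖ ^ 2)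
    (hanalytic : (⨅ n : ℕ, LinearMap.range ((T ^ n : H →L[ℂ] H) : H →ₗ[ℂ] H)) = ⊥)
    (hS1 : S * (ContinuousLinearMap.adjoint T * T) = 1)
    (hS2 : (ContinuousLinearMap.adjoint T * T) * S = 1)
    (L : H →L[ℂ] H) (hL : L = S * ContinuousLinearMap.adjoint T)
    (hW : ∀ A : H →L[ℂ] H, MemWOTAlgebra T A ↔
      ∃ a : ℕ → ℂ, ∀ (f : H) (n : ℕ),
        Submodule.orthogonalProjectionOnto (LinearMap.ker (ContinuousLinearMap.adjoint T : H →ₗ[ℂ] H))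
            ((L ^ n) (A f)) =
          ∑ k ∈ Finset.range (n + 1), a k •
            Submodule.orthogonalProjectionOnto (LinearMap.ker (ContinuousLinearMap.adjoint T : H →ₗ[ℂ] H))
              ((L ^ (n - k)) f)) :
    ∀ B : H →L[ℂ] H,
      (∀ M : Submodule ℂ H, IsClosed (M : Set H) →
        (∀ x ∈ M, T x ∈ M) → (∀ x ∈ M, B x ∈ M)) →
      MemWOTAlgebra T B :=
  stmt_17_general T S hS1 L hL hW
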